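/- arXiv:2001.10233 — 3 statements merged into one kernel-verified Lean document; each statement's English description precedes it below -/
import Mathlib

section
/- Let G be a groupoid. There is a functor ρ from the product groupoid Bℤ × ΛG to the inertia groupoid ΛG which is the identity on objects and sends a morphism (k, g), where k ∈ ℤ and g : (x, a) ⟶ (y, b) is a morphism of ΛG, to aᵏ ≫ g : (x, a) ⟶ (y, b). In particular ρ(0, 𝟙) = 𝟙 and ρ(k + l, g ≫ h) = ρ(k, g) ≫ ρ(l, h) for all composable morphisms g, h of ΛG and all k, l ∈ ℤ. -/
open CategoryTheory

universe v u

/-- The one-object groupoid `Bℤ` with endomorphism group the integers. -/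
abbrev BZ : Type := SingleObj (Multiplicative ℤ)

/-- Objects of the inertia groupoid `ΛG`: pairs `(x, a)` with `a : x ⟶ x` a loop of `G`. -/
structure Inertia (G : Type u) [Groupoid.{v, u} G] : Type (max u v) where
  pt : G
  loop : pt ⟶ pt

/-- The inertia groupoid: morphisms `(x, a) ⟶ (y, b)` are morphisms `g : x ⟶ y`
of `G` satisfying `a ≫ g = g ≫ b`; composition and identities are those of `G`. -/
instance Inertia.category (G : Type u) [Groupoid.{v, u} G] : Category (Inertia G) where
  Hom A B := { g : A.pt ⟶ B.pt // A.loop ≫ g = g ≫ B.loop }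
  id A := ⟨𝟙 A.pt, by simp⟩
  comp {A B C} f g := ⟨f.1 ≫ g.1, by
    rw [← Category.assoc, f.2, Category.assoc, g.2, ← Category.assoc]⟩
  id_comp f := by apply Subtype.ext; simp
  comp_id f := by apply Subtype.ext; simp
  assoc f g h := by apply Subtype.ext; simp

/-! The powers `aᵏ` of the loop are automorphisms of `(x, a)` in `ΛG`, and they are natural:
a morphism `g : (x, a) ⟶ (y, b)` conjugates `a` into `b`, hence `aᵏ` into `bᵏ`. So `k ↦ aᵏ` is a
homomorphism from `ℤ` into the centre of `ΛG`, which is what makes `(k, g) ↦ aᵏ ≫ g` a functor. -/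

namespace CategoryTheory.Groupoid

variable {C : Type u} [Groupoid.{v} C]

theorem zpow_comp_eq_comp_zpow {x y : C} {a : x ⟶ x} {b : y ⟶ y} {g : x ⟶ y}
    (h : a ≫ g = g ≫ b) (n : ℤ) : (a ^ n) ≫ g = g ≫ (b ^ n) := by
  have hconj : vertexGroupIsomOfMap g a = b := by simp [h]
  have hconj_zpow : vertexGroupIsomOfMap g (a ^ n) = b ^ n := by rw [map_zpow, hconj]
  simp [← hconj_zpow]

end CategoryTheory.Groupoid

namespace Inertia

variable {G : Type u} [Groupoid.{v, u} G]

@[ext]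
theorem hom_ext {A B : Inertia G} {f g : A ⟶ B} (h : f.1 = g.1) : f = g :=
  Subtype.ext h

@[simp]
theorem id_val (A : Inertia G) : (𝟙 A : A ⟶ A).1 = 𝟙 A.pt := rfl

@[simp]
theorem comp_val {A B C : Inertia G} (f : A ⟶ B) (g : B ⟶ C) : (f ≫ g).1 = f.1 ≫ g.1 := rfl

def loopPow (A : Inertia G) (k : ℤ) : A ⟶ A :=
  ⟨A.loop ^ k, (Commute.self_zpow A.loop k).eq⟩

@[simp]
theorem loopPow_val (A : Inertia G) (k : ℤ) : (loopPow A k).1 = A.loop ^ k := rfl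

@[simp]
theorem loopPow_zero (A : Inertia G) : loopPow A 0 = 𝟙 A := by
  ext; simp

theorem loopPow_add (A : Inertia G) (k l : ℤ) :
    loopPow A (k + l) = loopPow A k ≫ loopPow A l := by
  ext; simp [zpow_add]

theorem loopPow_comp {A B : Inertia G} (k : ℤ) (g : A ⟶ B) :
    loopPow A k ≫ g = g ≫ loopPow B k := by
  ext; exact Groupoid.zpow_comp_eq_comp_zpow g.2 k

variable (G) in
@[simps obj]
def rotation : BZ × Inertia G ⥤ Inertia G where
  obj X := X.2
  map {X _} f := loopPow X.2 (Multiplicative.toAdd f.1) ≫ f.2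
  map_id X := by rw [prod_id, SingleObj.id_as_one, toAdd_one, loopPow_zero, Category.id_comp]
  map_comp {X Y _} f g := by
    rw [prod_comp, SingleObj.comp_as_mul, toAdd_mul, add_comm, loopPow_add, Category.assoc,
      Category.assoc, reassoc_of% (loopPow_comp (Multiplicative.toAdd g.1) f.2)]

theorem rotation_map {X Y : BZ × Inertia G} (f : X ⟶ Y) :
    (rotation G).map f = loopPow X.2 (Multiplicative.toAdd f.1) ≫ f.2 := rfl

end Inertia

open Inertia in
/-- There is a functor `ρ` from the product groupoid `Bℤ × ΛG` to the inertia groupoid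
`ΛG` which is the identity on objects and sends a morphism `(k, g)`, with `k ∈ ℤ` and
`g : (x, a) ⟶ (y, b)` a morphism of `ΛG`, to `aᵏ ≫ g : (x, a) ⟶ (y, b)`; in particular
`ρ(0, 𝟙) = 𝟙` and `ρ(k + l, g ≫ h) = ρ(k, g) ≫ ρ(l, h)`. -/
theorem stmt4 {G : Type u} [Groupoid.{v, u} G] :
    ∃ ρ : BZ × Inertia G ⥤ Inertia G,
    ∃ hobj : ∀ X : BZ × Inertia G, ρ.obj X = X.2,
      (∀ (A B : Inertia G) (k : Multiplicative ℤ) (g : A ⟶ B),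
        (ρ.map ((k, g) :
            (SingleObj.star (Multiplicative ℤ), A) ⟶
            (SingleObj.star (Multiplicative ℤ), B))).1 =
          eqToHom (congrArg Inertia.pt (hobj (SingleObj.star (Multiplicative ℤ), A))) ≫
            ((A.loop ^ Multiplicative.toAdd k) ≫ g.1) ≫
            eqToHom (congrArg Inertia.pt (hobj (SingleObj.star (Multiplicative ℤ), B))).symm) ∧
      (∀ A : Inertia G,
        ρ.map (𝟙 (SingleObj.star (Multiplicative ℤ), A)) =
          𝟙 (ρ.obj (SingleObj.star (Multiplicative ℤ), A))) ∧
      (∀ (A B C : Inertia G) (k l : ℤ) (g : A ⟶ B) (h : B ⟶ C),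
        ρ.map ((Multiplicative.ofAdd (k + l), g ≫ h) :
            (SingleObj.star (Multiplicative ℤ), A) ⟶
            (SingleObj.star (Multiplicative ℤ), C)) =
          ρ.map ((Multiplicative.ofAdd k, g) :
            (SingleObj.star (Multiplicative ℤ), A) ⟶
            (SingleObj.star (Multiplicative ℤ), B)) ≫
          ρ.map ((Multiplicative.ofAdd l, h) :
            (SingleObj.star (Multiplicative ℤ), B) ⟶
            (SingleObj.star (Multiplicative ℤ), C))) := by
  refine ⟨rotation G, rotation_obj G, ?_, ?_, ?_⟩
  · intro A B k g
    -- `simp` cannot rewrite these `eqToHom`s, but they are definitionally identities.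
    change _ = 𝟙 A.pt ≫ ((A.loop ^ Multiplicative.toAdd k) ≫ g.1) ≫ 𝟙 B.pt
    simp [rotation_map]
  · intro A
    exact (rotation G).map_id _
  · intro A B C k l g h
    rw [← Functor.map_comp, prod_comp, SingleObj.comp_as_mul, ← ofAdd_add, add_comm]
end

section
/- Let (N, G, φ, A) be a crossed module of groupoids and N ⋊ G its crossed product groupoid. There is a functor ρ : Bℤ × (N ⋊ G) → N ⋊ G which is the identity on objects and sends a morphism (k, g), where k ∈ ℤ and g : (x, n) ⟶ (y, m) is a morphism of N ⋊ G, to the morphism φ_x(nᵏ) ≫ g : (x, n) ⟶ (y, m). In particular φ_x(nᵏ) ≫ g is again a morphism (x, n) ⟶ (y, m) of N ⋊ G (i.e. A(φ_x(nᵏ) ≫ g)(n) = m), and ρ(k + l, g ≫ h) = ρ(k, g) ≫ ρ(l, h) for all composable morphisms g, h of N ⋊ G and all k, l ∈ ℤ. -/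
open CategoryTheory

universe v u w

/-- A crossed module of groupoids `(N, G, φ, A)`: a groupoid `G`, a family of groups
`N x` indexed by the objects of `G`, group homomorphisms `φ x : N x →* (x ⟶ x)` into
the vertex groups of `G`, and for every morphism `g : x ⟶ y` a group isomorphism
`A g : N x ≃* N y`, subject to `A (𝟙 x) = id`, `A (g ≫ h) = A h ∘ A g`, the
equivariance condition `φ y (A g n) = g⁻¹ ≫ φ x n ≫ g` and the Peiffer condition
`A (φ x m) n = m⁻¹ * n * m`. -/
structure CrossedModuleGpd (G : Type u) [Groupoid.{v, u} G]
    (N : G → Type w) [∀ x, Group (N x)] where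
  φ : ∀ x : G, N x →* (x ⟶ x)
  A : ∀ {x y : G}, (x ⟶ y) → (N x ≃* N y)
  A_id : ∀ x : G, A (𝟙 x) = MulEquiv.refl (N x)
  A_comp : ∀ {x y z : G} (g : x ⟶ y) (h : y ⟶ z), A (g ≫ h) = (A g).trans (A h)
  equivariance : ∀ {x y : G} (g : x ⟶ y) (n : N x),
    φ y (A g n) = Groupoid.inv g ≫ φ x n ≫ g
  peiffer : ∀ {x : G} (m n : N x), A (φ x m) n = m⁻¹ * n * m

variable {G : Type u} [Groupoid.{v, u} G] {N : G → Type w} [∀ x, Group (N x)]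

/-- Objects of the crossed product groupoid `N ⋊ G`: pairs `(x, n)` with `n ∈ N x`. -/
def CrossedProd (_C : CrossedModuleGpd G N) : Type (max u w) := Σ x : G, N x

/-- The crossed product groupoid `N ⋊ G`: morphisms `(x, n) ⟶ (y, m)` are morphisms
`g : x ⟶ y` of `G` with `A g n = m`; composition and identities are those of `G`. -/
instance CrossedProd.category (C : CrossedModuleGpd G N) : Category (CrossedProd C) where
  Hom a b := { g : a.1 ⟶ b.1 // C.A g a.2 = b.2 }
  id a := ⟨𝟙 a.1, by rw [C.A_id]; rfl⟩
  comp {a b c} f g := ⟨f.1 ≫ g.1, by rw [C.A_comp]; simp [f.2, g.2]⟩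
  id_comp f := by apply Subtype.ext; simp
  comp_id f := by apply Subtype.ext; simp
  assoc f g h := by apply Subtype.ext; simp

/-!
A power `nᵏ` commutes with `n`, so by the Peiffer condition the loop `φ (nᵏ)` fixes `n` and
`φ (nᵏ) ≫ g` is again a morphism of `N ⋊ G`. Equivariance moves `φ (mˡ)` at the target of
`g : (x, n) ⟶ (y, m)` back across `g` as `g⁻¹ ≫ φ (nˡ) ≫ g`, which gives
`φ (nᵏ⁺ˡ) ≫ g ≫ h = (φ (nᵏ) ≫ g) ≫ (φ (mˡ) ≫ h)`.
-/

namespace CrossedModuleGpd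

variable (C : CrossedModuleGpd G N)

theorem A_φ_zpow_self {x : G} (n : N x) (k : ℤ) : C.A (C.φ x (n ^ k)) n = n := by
  rw [C.peiffer]
  group

theorem φ_zpow_target {a b : CrossedProd C} (g : a ⟶ b) (l : ℤ) :
    C.φ b.1 (b.2 ^ l) = Groupoid.inv g.1 ≫ C.φ a.1 (a.2 ^ l) ≫ g.1 := by
  have h := C.equivariance g.1 (a.2 ^ l)
  rwa [map_zpow, g.2] at h

end CrossedModuleGpd

namespace CrossedProd

variable {C : CrossedModuleGpd G N}

theorem A_φ_zpow_comp {a b : CrossedProd C} (k : ℤ) (g : a ⟶ b) :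
    C.A (C.φ a.1 (a.2 ^ k) ≫ g.1) a.2 = b.2 := by
  rw [C.A_comp, MulEquiv.trans_apply, C.A_φ_zpow_self, g.2]

def twist {a b : CrossedProd C} (k : ℤ) (g : a ⟶ b) : a ⟶ b :=
  ⟨C.φ a.1 (a.2 ^ k) ≫ g.1, A_φ_zpow_comp k g⟩

@[simp]
theorem twist_val {a b : CrossedProd C} (k : ℤ) (g : a ⟶ b) :
    (twist k g).1 = C.φ a.1 (a.2 ^ k) ≫ g.1 :=
  rfl

@[simp]
theorem twist_zero {a b : CrossedProd C} (g : a ⟶ b) : twist 0 g = g := by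
  apply Subtype.ext
  rw [twist_val, zpow_zero, map_one]
  exact Category.id_comp _

theorem twist_add_comp {a b c : CrossedProd C} (k l : ℤ) (g : a ⟶ b) (h : b ⟶ c) :
    twist (k + l) (g ≫ h) = twist k g ≫ twist l h := by
  apply Subtype.ext
  change C.φ a.1 (a.2 ^ (k + l)) ≫ g.1 ≫ h.1 =
    (C.φ a.1 (a.2 ^ k) ≫ g.1) ≫ C.φ b.1 (b.2 ^ l) ≫ h.1
  rw [C.φ_zpow_target g, zpow_add, map_mul, Groupoid.vertexGroup_mul]
  simp

variable (C) in
def twistFunctor : BZ × CrossedProd C ⥤ CrossedProd C where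
  obj X := X.2
  map f := twist (Multiplicative.toAdd f.1) f.2
  map_id X := twist_zero (𝟙 X.2)
  map_comp f g := by
    -- composition in `SingleObj` is multiplication in the opposite order
    change twist (Multiplicative.toAdd (f.1 ≫ g.1)) (f.2 ≫ g.2) = _
    rw [SingleObj.comp_as_mul, toAdd_mul, add_comm, twist_add_comp]

end CrossedProd

open CrossedProd in
/-- For a crossed module of groupoids `(N, G, φ, A)` there is a functor
`ρ : Bℤ × (N ⋊ G) ⥤ N ⋊ G` which is the identity on objects and sends a morphism
`(k, g)`, with `g : (x, n) ⟶ (y, m)`, to `φ x (nᵏ) ≫ g : (x, n) ⟶ (y, m)`; in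
particular `φ x (nᵏ) ≫ g` is again a morphism `(x, n) ⟶ (y, m)` (i.e.
`A (φ x (nᵏ) ≫ g) n = m`), and `ρ(k + l, g ≫ h) = ρ(k, g) ≫ ρ(l, h)`. -/
theorem stmt5 (C : CrossedModuleGpd G N) :
    (∀ (a b : CrossedProd C) (k : ℤ) (g : a ⟶ b),
      C.A (C.φ a.1 (a.2 ^ k) ≫ g.1) a.2 = b.2) ∧
    ∃ ρ : BZ × CrossedProd C ⥤ CrossedProd C,
    ∃ hobj : ∀ X : BZ × CrossedProd C, ρ.obj X = X.2,
      (∀ (a b : CrossedProd C) (k : Multiplicative ℤ) (g : a ⟶ b),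
        (ρ.map ((k, g) :
            (SingleObj.star (Multiplicative ℤ), a) ⟶
            (SingleObj.star (Multiplicative ℤ), b))).1 =
          eqToHom (congrArg Sigma.fst (hobj (SingleObj.star (Multiplicative ℤ), a))) ≫
            (C.φ a.1 (a.2 ^ Multiplicative.toAdd k) ≫ g.1) ≫
            eqToHom (congrArg Sigma.fst (hobj (SingleObj.star (Multiplicative ℤ), b))).symm) ∧
      (∀ (a b c : CrossedProd C) (k l : ℤ) (g : a ⟶ b) (h : b ⟶ c),
        ρ.map ((Multiplicative.ofAdd (k + l), g ≫ h) :
            (SingleObj.star (Multiplicative ℤ), a) ⟶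
            (SingleObj.star (Multiplicative ℤ), c)) =
          ρ.map ((Multiplicative.ofAdd k, g) :
            (SingleObj.star (Multiplicative ℤ), a) ⟶
            (SingleObj.star (Multiplicative ℤ), b)) ≫
          ρ.map ((Multiplicative.ofAdd l, h) :
            (SingleObj.star (Multiplicative ℤ), b) ⟶
            (SingleObj.star (Multiplicative ℤ), c))) := by
  refine ⟨fun _ _ ↦ A_φ_zpow_comp, twistFunctor C, fun _ ↦ rfl, ?_, ?_⟩
  -- `hobj` holds by `rfl`, so both `eqToHom`s are identities
  · exact fun _ _ _ _ ↦ ((Category.id_comp _).trans (Category.comp_id _)).symm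
  · exact fun _ _ _ ↦ twist_add_comp
end

section
/- Let N and G be groups, let G act on N by group automorphisms, and let φ : N → G be a group homomorphism satisfying φ(g • x) = g * φ(x) * g⁻¹ for all g ∈ G, x ∈ N, and φ(y) • x = y * x * y⁻¹ for all x, y ∈ N. Let N ⋊ G be the transformation groupoid of the associated right action x^g := g⁻¹ • x of G on the set N: its objects are the elements of N, its morphisms are pairs (x, g) : x ⟶ g⁻¹ • x with x ∈ N, g ∈ G, and composition is (x, g) ≫ (g⁻¹ • x, h) = (x, g*h). Then the assignment which is the identity on objects and sends a morphism (k, (x, g)) of the product groupoid Bℤ × (N ⋊ G) to the morphism (x, φ(x)ᵏ * g) of N ⋊ G is a functor; in particular (x, φ(x)ᵏ * g) is again a morphism x ⟶ g⁻¹ • x, and the assignment respects composition and identities. -/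
open CategoryTheory

/-- The transformation groupoid (crossed product groupoid) `N ⋊ G` of the right action
`x ^ g := g⁻¹ • x` of `G` on the set `N`: its objects are the elements of `N`. -/
structure TransGpd (G N : Type*) [Group G] [Group N] [MulDistribMulAction G N] where
  pt : N

/-- Morphisms of `N ⋊ G` are pairs `(x, g) : x ⟶ g⁻¹ • x` (encoded as
`{g : G // g⁻¹ • x = y}`), and composition is `(x, g) ≫ (g⁻¹ • x, h) = (x, g * h)`. -/
instance TransGpd.category (G N : Type*) [Group G] [Group N] [MulDistribMulAction G N] :
    Category (TransGpd G N) where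
  Hom x y := { g : G // g⁻¹ • x.pt = y.pt }
  id x := ⟨1, by simp⟩
  comp {x y z} f g := ⟨f.1 * g.1, by rw [mul_inv_rev, mul_smul, f.2, g.2]⟩
  id_comp f := by apply Subtype.ext; simp
  comp_id f := by apply Subtype.ext; simp
  assoc f g h := by apply Subtype.ext; simp [mul_assoc]

/-!
By the Peiffer condition, `φ x • x = x x x⁻¹ = x`, so every power `φ(x)ᵏ` fixes `x`
and `(x, φ(x)ᵏ g)` has the same target as `(x, g)`. Equivariance gives `φ(g⁻¹ • x) = g⁻¹ φ(x) g`,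
i.e. `φ(x)` is carried along every morphism `(x, g)` by conjugation, which is exactly what makes
`(k, (x, g)) ↦ (x, φ(x)ᵏ g)` compatible with composition.
-/

section CrossedModule

variable {N G : Type*} [Group N] [Group G] [MulDistribMulAction G N] (φ : N →* G)

theorem zpow_smul_self_of_peiffer (hpeiffer : ∀ x y : N, φ y • x = y * x * y⁻¹) (x : N) (k : ℤ) :
    φ x ^ k • x = x := by
  have hfix : φ x ∈ MulAction.stabilizer G x := by
    simp [MulAction.mem_stabilizer_iff, hpeiffer]
  exact zpow_mem hfix k

theorem inv_zpow_mul_smul_of_peiffer (hpeiffer : ∀ x y : N, φ y • x = y * x * y⁻¹)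
    (x : N) (g : G) (k : ℤ) : (φ x ^ k * g)⁻¹ • x = g⁻¹ • x := by
  rw [mul_inv_rev, mul_smul, ← zpow_neg, zpow_smul_self_of_peiffer φ hpeiffer]

theorem zpow_map_of_inv_smul_eq (hφ : ∀ (g : G) (x : N), φ (g • x) = g * φ x * g⁻¹)
    {x y : N} {g : G} (h : g⁻¹ • x = y) (k : ℤ) : φ y ^ k = g⁻¹ * φ x ^ k * g := by
  have hconj : φ y = g⁻¹ * φ x * g⁻¹⁻¹ := by rw [← h, hφ]
  rw [hconj, conj_zpow, inv_inv]

def TransGpd.zpowTwist (hφ : ∀ (g : G) (x : N), φ (g • x) = g * φ x * g⁻¹)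
    (hpeiffer : ∀ x y : N, φ y • x = y * x * y⁻¹) : BZ × TransGpd G N ⥤ TransGpd G N where
  obj X := X.2
  map {X _} f := ⟨φ X.2.pt ^ Multiplicative.toAdd f.1 * f.2.1, by
    rw [inv_zpow_mul_smul_of_peiffer φ hpeiffer]; exact f.2.2⟩
  map_id X := by
    apply Subtype.ext
    change φ X.2.pt ^ Multiplicative.toAdd (1 : Multiplicative ℤ) * (1 : G) = 1
    simp
  map_comp {X Y _} f g := by
    apply Subtype.ext
    change φ X.2.pt ^ Multiplicative.toAdd ((show Multiplicative ℤ from g.1) * f.1) * (f.2.1 * g.2.1) =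
      φ X.2.pt ^ Multiplicative.toAdd f.1 * f.2.1 * (φ Y.2.pt ^ Multiplicative.toAdd g.1 * g.2.1)
    rw [toAdd_mul, zpow_add, zpow_map_of_inv_smul_eq φ hφ f.2.2]
    group

end CrossedModule

/-- Let `G` act on the group `N` by automorphisms and let `φ : N →* G` satisfy the
equivariance and Peiffer conditions.  Then the assignment which is the identity on
objects and sends a morphism `(k, (x, g))` of `Bℤ × (N ⋊ G)` to `(x, φ(x)ᵏ * g)` is a
functor `Bℤ × (N ⋊ G) ⥤ N ⋊ G`; in particular `(x, φ(x)ᵏ * g)` is again a morphism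
`x ⟶ g⁻¹ • x`. -/
theorem stmt7 {N G : Type*} [Group N] [Group G] [MulDistribMulAction G N]
    (φ : N →* G) (hφ : ∀ (g : G) (x : N), φ (g • x) = g * φ x * g⁻¹)
    (hpeiffer : ∀ x y : N, φ y • x = y * x * y⁻¹) :
    (∀ (x : N) (g : G) (k : ℤ), (φ x ^ k * g)⁻¹ • x = g⁻¹ • x) ∧
    ∃ ρ : BZ × TransGpd G N ⥤ TransGpd G N,
      (∀ X : BZ × TransGpd G N, ρ.obj X = X.2) ∧
      (∀ (x y : TransGpd G N) (k : Multiplicative ℤ) (f : x ⟶ y),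
        (ρ.map ((k, f) :
            (SingleObj.star (Multiplicative ℤ), x) ⟶
            (SingleObj.star (Multiplicative ℤ), y))).1 =
          φ x.pt ^ Multiplicative.toAdd k * f.1) :=
  ⟨inv_zpow_mul_smul_of_peiffer φ hpeiffer,
    TransGpd.zpowTwist φ hφ hpeiffer, fun _ => rfl, fun _ _ _ _ => rfl⟩
end
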